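/- Let μ = μ_{R,B} be the self-affine measure for R = [[2,1],[0,2]] and B = {(0,0),(1,0)}. Every spectrum Λ of μ satisfies 0 ≤ dim_Be(Λ) ≤ 1, and both bounds are attained: there exist spectra Λ₀ and Λ₁ of μ with dim_Be(Λ₀) = 0 and dim_Be(Λ₁) = 1. -/

import Mathlib

open MeasureTheory Filter Set Metric
open scoped ENNReal

noncomputable section

/-- The plane with the Euclidean metric. -/
abbrev Plane : Type := EuclideanSpace ℝ (Fin 2)

/-- The point `(a, b)` of the Euclidean plane. -/
def pt (a b : ℝ) : Plane := WithLp.toLp 2 ![a, b]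

/-- The self-affine measure `μ_{R,B}` for `R = [[2,1],[0,2]]`, `B = {(0,0),(1,0)}`:
the pushforward of Lebesgue measure on `[0,1]` under `x ↦ (x, 0)`. -/
def muRB : Measure Plane :=
  Measure.map (fun x : ℝ => pt x 0) (volume.restrict (Set.Icc (0:ℝ) 1))

instance : IsProbabilityMeasure (volume.restrict (Set.Icc (0:ℝ) 1)) :=
  ⟨by simp [Real.volume_Icc]⟩

lemma measurable_pt0 : Measurable (fun x : ℝ => pt x 0) := by
  unfold pt
  refine (PiLp.continuous_toLp (p := 2) (β := fun _ : Fin 2 => ℝ)).measurable.comp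
    (measurable_pi_lambda _ (fun i => ?_))
  fin_cases i
  · simp only [Matrix.cons_val_zero]
    exact measurable_id
  · simp only [Matrix.cons_val_one, Matrix.head_cons]
    exact measurable_const

instance : IsProbabilityMeasure muRB :=
  Measure.isProbabilityMeasure_map measurable_pt0.aemeasurable

/-- The Fourier transform `μ̂(ξ) = ∫ e^{-2πi⟨ξ,x⟩} dμ(x)` of a measure on the plane. -/
def fourierTransform (μ : Measure Plane) (ξ : Plane) : ℂ :=
  ∫ x, Complex.exp ((-(2 * Real.pi * (inner ℝ ξ x : ℝ)) : ℝ) * Complex.I) ∂μ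

/-- The exponential function `e_λ(x) = e^{-2πi⟨λ,x⟩}`. -/
def expFn (lam : Plane) : Plane → ℂ :=
  fun x => Complex.exp ((-(2 * Real.pi * (inner ℝ lam x : ℝ)) : ℝ) * Complex.I)

lemma expFn_memLp (μ : Measure Plane) [IsFiniteMeasure μ] (lam : Plane) :
    MemLp (expFn lam) 2 μ := by
  refine MemLp.of_bound ?_ 1 ?_
  · apply Continuous.aestronglyMeasurable
    unfold expFn
    have h1 : Continuous fun x : Plane => (inner ℝ lam x : ℝ) :=
      continuous_const.inner continuous_id
    exact Complex.continuous_exp.comp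
      ((Complex.continuous_ofReal.comp ((continuous_const.mul h1).neg)).mul continuous_const)
  · refine Eventually.of_forall fun x => ?_
    unfold expFn
    rw [Complex.norm_exp_ofReal_mul_I]

/-- The exponential `e_λ` as an element of `L²(μ)`. -/
def expLp (μ : Measure Plane) [IsFiniteMeasure μ] (lam : Plane) : Lp ℂ 2 μ :=
  (expFn_memLp μ lam).toLp _

/-- `Λ` is an orthogonal set of `μ`: the exponentials `{e_λ : λ ∈ Λ}` form an
orthonormal family in `L²(μ)`. -/
def IsOrthogonalSet (μ : Measure Plane) [IsFiniteMeasure μ] (Λ : Set Plane) : Prop :=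
  Orthonormal ℂ (fun lam : Λ => expLp μ lam)

/-- `Λ` is a spectrum of `μ`: the exponentials `{e_λ : λ ∈ Λ}` form an
orthonormal basis of `L²(μ)`. -/
def IsSpectrum (μ : Measure Plane) [IsFiniteMeasure μ] (Λ : Set Plane) : Prop :=
  Orthonormal ℂ (fun lam : Λ => expLp μ lam) ∧
    (Submodule.span ℂ (Set.range (fun lam : Λ => expLp μ lam))).topologicalClosure = ⊤

/-- The upper `r`-Beurling density
`D_r^+(Λ) = limsup_{h→∞} sup_{x} #(Λ ∩ B(x,h)) / h^r`. -/
def beurlingDensity (r : ℝ) (Λ : Set Plane) : ℝ≥0∞ :=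
  limsup (fun h : ℝ =>
    ⨆ x : Plane, ((Λ ∩ Metric.ball x h).encard : ℝ≥0∞) / ENNReal.ofReal (h ^ r)) atTop

/-- The upper `r`-density (centered at the origin)
`B_r^+(Λ) = limsup_{h→∞} #(Λ ∩ B(0,h)) / h^r`. -/
def upperDensity (r : ℝ) (Λ : Set Plane) : ℝ≥0∞ :=
  limsup (fun h : ℝ =>
    ((Λ ∩ Metric.ball (0 : Plane) h).encard : ℝ≥0∞) / ENNReal.ofReal (h ^ r)) atTop

/-- The Beurling dimension `dim_Be(Λ) = sup {r > 0 : D_r^+(Λ) = ∞}`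
(equal to `0` when the set is empty, by the convention `sSup ∅ = 0` in `ℝ`). -/
def beurlingDim (Λ : Set Plane) : ℝ :=
  sSup {r : ℝ | 0 < r ∧ beurlingDensity r Λ = ⊤}

/-- The Banach dimension `dim_Ba(Λ) = sup {r > 0 : B_r^+(Λ) = ∞}`. -/
def banachDim (Λ : Set Plane) : ℝ :=
  sSup {r : ℝ | 0 < r ∧ upperDensity r Λ = ⊤}

/-- The sign of an integer, as a real number. -/
def isgn (n : ℤ) : ℝ := (Int.sign n : ℝ)

end

/-!
Under `μ` the exponential `e_λ` only sees the first coordinate, and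
`⟪e_λ, e_λ'⟫ = ∫₀¹ e^{2πi(λ₁ - λ'₁)t} dt`, so `Λ` is orthogonal iff the first coordinates of
distinct points differ by nonzero integers. A ball of radius `h` then meets `Λ` in at most
`⌈2h⌉` points, whence `dim_Be Λ ≤ 1`.

Conversely every graph `{(n, g n) : n ∈ ℤ}` is a spectrum: along `t ↦ (t, 0)` its exponentials
become the Fourier basis of `L²(ℝ/ℤ)`. For `g = 0` a ball of radius `h` around the origin
contains about `h` points, so the dimension is `1`. For `g n = 4 ^ e n` with `e : ℤ → ℕ`
injective, a window of length `2h` contains at most one height `≥ h`, so a ball of radius `h`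
contains `O(log h)` points and the dimension is `0`.
-/

open Complex in
theorem intervalIntegral_exp_two_pi_mul_I_eq_zero_iff (d : ℝ) :
    ∫ t in (0:ℝ)..1, exp (2 * Real.pi * d * I * t) = 0 ↔ ∃ n : ℤ, n ≠ 0 ∧ d = n := by
  rcases eq_or_ne d 0 with rfl | hd
  · simp [eq_comm (a := (0:ℝ))]
  have h2piI : (2 * Real.pi * I : ℂ) ≠ 0 := by simp [Real.pi_ne_zero]
  have hc : 2 * Real.pi * d * I ≠ 0 := by simp [hd, Real.pi_ne_zero]
  rw [integral_exp_mul_complex hc, div_eq_zero_iff, or_iff_left hc]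
  simp only [ofReal_one, mul_one, ofReal_zero, mul_zero, exp_zero, sub_eq_zero, exp_eq_one_iff]
  refine exists_congr fun n => ?_
  rw [show (2 * Real.pi * d * I : ℂ) = d * (2 * Real.pi * I) by ring, mul_left_inj' h2piI]
  norm_cast
  exact ⟨fun h => ⟨by rintro rfl; simp_all, h⟩, And.right⟩

theorem LinearIsometry.topologicalClosure_span_eq_top_of_image {𝕜 E F : Type*} [RCLike 𝕜]
    [NormedAddCommGroup E] [NormedSpace 𝕜 E] [NormedAddCommGroup F] [NormedSpace 𝕜 F]
    (L : E →ₗᵢ[𝕜] F) {s : Set E} (hs : (Submodule.span 𝕜 (L '' s)).topologicalClosure = ⊤) :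
    (Submodule.span 𝕜 s).topologicalClosure = ⊤ := by
  rw [← Submodule.dense_iff_topologicalClosure_eq_top] at hs ⊢
  rw [L.isometry.isEmbedding.isInducing.dense_iff]
  have himage : L '' Submodule.span 𝕜 s = Submodule.span 𝕜 (L '' s) := by
    have := congrArg SetLike.coe (Submodule.map_span L.toLinearMap s)
    simpa [Submodule.map_coe] using this
  intro x
  rw [himage, hs.closure_eq]
  trivial

lemma abs_apply_sub_lt_of_mem_ball {ι : Type*} [Fintype ι] {x y : EuclideanSpace ℝ ι} {h : ℝ}
    (i : ι) (hy : y ∈ ball x h) : |y i - x i| < h :=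
  (PiLp.dist_apply_le y x i).trans_lt hy

lemma encard_le_ceil_of_one_le_abs_sub {S : Set ℝ} {a ℓ : ℝ} (hS : S ⊆ Ico a (a + ℓ))
    (hsep : S.Pairwise fun s t => 1 ≤ |s - t|) : S.encard ≤ ⌈ℓ⌉₊ := by
  have hinj : InjOn (fun s => ⌊s - a⌋₊) S := by
    intro s hs t ht hst
    by_contra hne
    have hfloor : ⌊s - a⌋ = ⌊t - a⌋ := by
      rw [← Int.natCast_floor_eq_floor (sub_nonneg.2 (hS hs).1),
        ← Int.natCast_floor_eq_floor (sub_nonneg.2 (hS ht).1)]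
      exact congrArg _ hst
    have := Int.abs_sub_lt_one_of_floor_eq_floor hfloor
    rw [sub_sub_sub_cancel_right] at this
    exact (hsep hs ht hne).not_gt this
  have himage : (fun s => ⌊s - a⌋₊) '' S ⊆ (Finset.range ⌈ℓ⌉₊ : Set ℕ) := by
    rintro _ ⟨s, hs, rfl⟩
    have := hS hs
    exact Finset.mem_coe.2 <| Finset.mem_range.2 <|
      Nat.floor_lt_ceil_of_lt_of_pos (by linarith [this.2]) (by linarith [this.1, this.2])
  calc S.encard = ((fun s => ⌊s - a⌋₊) '' S).encard := hinj.encard_image.symm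
    _ ≤ (Finset.range ⌈ℓ⌉₊ : Set ℕ).encard := encard_le_encard himage
    _ = ⌈ℓ⌉₊ := by rw [encard_coe_eq_coe_finsetCard, Finset.card_range]

lemma four_mul_pow_le_of_pow_lt {j k : ℕ} (hjk : (4:ℝ) ^ j < 4 ^ k) : 4 * 4 ^ j ≤ (4:ℝ) ^ k := by
  rw [← pow_succ']
  exact pow_le_pow_right₀ (by norm_num) ((pow_lt_pow_iff_right₀ (by norm_num)).1 hjk)

lemma encard_range_pow_four_inter_Ioo_le (c h : ℝ) :
    ((range fun k : ℕ => (4:ℝ) ^ k) ∩ Ioo (c - h) (c + h)).encard ≤ ⌈Real.logb 4 h⌉₊ + 1 := by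
  set S := (range fun k : ℕ => (4:ℝ) ^ k) ∩ Ioo (c - h) (c + h)
  have hsmall :
      S ∩ Iio h ⊆ (fun k : ℕ => (4:ℝ) ^ k) '' (Finset.range ⌈Real.logb 4 h⌉₊ : Set ℕ) := by
    rintro _ ⟨⟨⟨k, rfl⟩, -⟩, hkh⟩
    refine ⟨k, Finset.mem_coe.2 <| Finset.mem_range.2 <| Nat.lt_ceil.2 ?_, rfl⟩
    rw [Real.lt_logb_iff_rpow_lt (by norm_num) ((pow_pos (by norm_num) k).trans hkh),
      Real.rpow_natCast]
    exact hkh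
  have hlarge : (S ∩ Ici h).encard ≤ 1 := by
    refine encard_le_one_iff.2 ?_
    suffices ∀ y ∈ S ∩ Ici h, ∀ y' ∈ S ∩ Ici h, ¬ y < y' from
      fun y y' hy hy' => le_antisymm (not_lt.1 (this y' hy' y hy)) (not_lt.1 (this y hy y' hy'))
    rintro _ ⟨⟨⟨j, rfl⟩, hj⟩, hjh⟩ _ ⟨⟨⟨k, rfl⟩, hk⟩, -⟩ hjk
    have := four_mul_pow_le_of_pow_lt hjk
    linarith [hj.1, hj.2, hk.1, hk.2, mem_Ici.1 hjh]
  calc S.encard ≤ (S ∩ Iio h).encard + (S ∩ Ici h).encard := by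
        have hdisj : Disjoint (S ∩ Iio h) (S ∩ Ici h) :=
          disjoint_left.2 fun _ hy hy' => (mem_Iio.1 hy.2).not_ge (mem_Ici.1 hy'.2)
        rw [← encard_union_eq hdisj, ← inter_union_distrib_left, Iio_union_Ici, inter_univ]
    _ ≤ ⌈Real.logb 4 h⌉₊ + 1 := by
        gcongr
        calc (S ∩ Iio h).encard ≤ (Finset.range ⌈Real.logb 4 h⌉₊ : Set ℕ).encard :=
              (encard_le_encard hsmall).trans (encard_image_le _ _)
          _ = ⌈Real.logb 4 h⌉₊ := by rw [encard_coe_eq_coe_finsetCard, Finset.card_range]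

lemma eventually_ceil_logb_add_one_le_rpow {b r : ℝ} (hb : 1 < b) (hr : 0 < r) :
    ∀ᶠ h in atTop, ((⌈Real.logb b h⌉₊ + 1 : ℕ) : ℝ) ≤ h ^ r := by
  have hlog : ∀ᶠ h in atTop, Real.logb b h ≤ h ^ r / 2 := by
    have := ((isLittleO_log_rpow_atTop hr).const_mul_left (Real.log b)⁻¹).def
      (by norm_num : (0:ℝ) < 1 / 2)
    filter_upwards [this, eventually_ge_atTop 0] with h hh h0
    calc Real.logb b h = (Real.log b)⁻¹ * Real.log h := by rw [Real.logb, div_eq_inv_mul]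
      _ ≤ 1 / 2 * ‖h ^ r‖ := (Real.le_norm_self _).trans hh
      _ = h ^ r / 2 := by rw [Real.norm_of_nonneg (by positivity)]; ring
  filter_upwards [hlog, (tendsto_rpow_atTop hr).eventually_ge_atTop 4, eventually_ge_atTop 1]
    with h hlogh hpow h1
  have := Nat.ceil_lt_add_one (Real.logb_nonneg hb h1)
  push_cast
  linarith

lemma beurlingDim_nonneg (Λ : Set Plane) : 0 ≤ beurlingDim Λ :=
  Real.sSup_nonneg fun _ hr => hr.1.le

lemma beurlingDim_le_of_forall_gt {Λ : Set Plane} {s : ℝ} (hs : 0 ≤ s)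
    (h : ∀ r, s < r → beurlingDensity r Λ ≠ ⊤) : beurlingDim Λ ≤ s :=
  Real.sSup_le (fun r hr => not_lt.mp fun hsr => h r hsr hr.2) hs

lemma beurlingDim_eq_of_forall_lt_of_forall_gt {Λ : Set Plane} {s : ℝ} (hs : 0 < s)
    (hlt : ∀ r ∈ Ioo 0 s, beurlingDensity r Λ = ⊤) (hgt : ∀ r, s < r → beurlingDensity r Λ ≠ ⊤) :
    beurlingDim Λ = s := by
  refine le_antisymm (beurlingDim_le_of_forall_gt hs.le hgt) ?_
  have hbdd : BddAbove {r : ℝ | 0 < r ∧ beurlingDensity r Λ = ⊤} :=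
    ⟨s, fun r hr => not_lt.mp fun hsr => hgt r hsr hr.2⟩
  rw [← csSup_Ioo hs]
  exact csSup_le_csSup hbdd (nonempty_Ioo.mpr hs) fun r hr => ⟨hr.1, hlt r hr⟩

lemma beurlingDensity_le_one_of_encard_le {Λ : Set Plane} {r : ℝ} (N : ℝ → ℕ)
    (hΛ : ∀ x h, (Λ ∩ ball x h).encard ≤ N h) (hN : ∀ᶠ h in atTop, (N h : ℝ) ≤ h ^ r) :
    beurlingDensity r Λ ≤ 1 := by
  refine limsup_le_of_le (by isBoundedDefault) ?_
  filter_upwards [hN] with h hNh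
  refine iSup_le fun x => ENNReal.div_le_of_le_mul ?_
  calc ((Λ ∩ ball x h).encard : ℝ≥0∞) ≤ N h := by exact_mod_cast hΛ x h
    _ = ENNReal.ofReal (N h) := (ENNReal.ofReal_natCast _).symm
    _ ≤ 1 * ENNReal.ofReal (h ^ r) := by rw [one_mul]; exact ENNReal.ofReal_le_ofReal hNh

lemma beurlingDensity_eq_top_of_ceil_le_encard {Λ : Set Plane} {r : ℝ} (hr : r < 1) (x : Plane)
    (hΛ : ∀ h, (⌈h⌉₊ : ℕ∞) ≤ (Λ ∩ ball x h).encard) : beurlingDensity r Λ = ⊤ := by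
  refine top_le_iff.mp ?_
  rw [← (ENNReal.tendsto_ofReal_atTop.comp (tendsto_rpow_atTop (sub_pos.2 hr))).limsup_eq]
  refine limsup_le_limsup ?_ (by isBoundedDefault) (by isBoundedDefault)
  filter_upwards [eventually_gt_atTop 0] with h hh
  calc ENNReal.ofReal (h ^ (1 - r)) = ENNReal.ofReal h / ENNReal.ofReal (h ^ r) := by
        rw [Real.rpow_sub hh, Real.rpow_one, ENNReal.ofReal_div_of_pos (by positivity)]
    _ ≤ (Λ ∩ ball x h).encard / ENNReal.ofReal (h ^ r) := by
        gcongr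
        calc ENNReal.ofReal h ≤ ENNReal.ofReal ⌈h⌉₊ := ENNReal.ofReal_le_ofReal (Nat.le_ceil h)
          _ = (⌈h⌉₊ : ℕ∞) := ENNReal.ofReal_natCast _
          _ ≤ _ := by exact_mod_cast hΛ h
    _ ≤ ⨆ y : Plane, ((Λ ∩ ball y h).encard : ℝ≥0∞) / ENNReal.ofReal (h ^ r) :=
        le_iSup (fun y : Plane => ((Λ ∩ ball y h).encard : ℝ≥0∞) / ENNReal.ofReal (h ^ r)) x

@[simp] lemma pt_apply_zero (a b : ℝ) : pt a b 0 = a := by simp [pt]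

@[simp] lemma pt_apply_one (a b : ℝ) : pt a b 1 = b := by simp [pt]

lemma inner_pt_zero (lam : Plane) (t : ℝ) : inner ℝ lam (pt t 0) = lam 0 * t := by
  simp [pt, PiLp.inner_apply, Fin.sum_univ_two, mul_comm]

lemma integral_muRB {f : Plane → ℂ} (hf : AEStronglyMeasurable f muRB) :
    ∫ x, f x ∂muRB = ∫ t in (0:ℝ)..1, f (pt t 0) := by
  rw [muRB, integral_map measurable_pt0.aemeasurable hf, integral_Icc_eq_integral_Ioc,
    intervalIntegral.integral_of_le zero_le_one]

@[fun_prop] lemma continuous_expFn (lam : Plane) : Continuous (expFn lam) := by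
  unfold expFn
  fun_prop

lemma inner_expLp_muRB (lam lam' : Plane) :
    inner ℂ (expLp muRB lam) (expLp muRB lam') =
      ∫ t in (0:ℝ)..1, Complex.exp (2 * Real.pi * (lam 0 - lam' 0 : ℝ) * Complex.I * t) := by
  have hint : (fun x => inner ℂ (expLp muRB lam x) (expLp muRB lam' x)) =ᵐ[muRB]
      fun x => starRingEnd ℂ (expFn lam x) * expFn lam' x := by
    filter_upwards [(expFn_memLp muRB lam).coeFn_toLp, (expFn_memLp muRB lam').coeFn_toLp]
      with x hx hx'
    rw [expLp, expLp, hx, hx', RCLike.inner_apply, mul_comm]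
  rw [L2.inner_def, integral_congr_ae hint, integral_muRB (by fun_prop)]
  refine intervalIntegral.integral_congr fun t _ => ?_
  simp only [expFn, inner_pt_zero, ← Complex.exp_conj, ← Complex.exp_add, map_mul,
    Complex.conj_ofReal, Complex.conj_I]
  push_cast
  ring_nf

lemma isOrthogonalSet_muRB_iff {Λ : Set Plane} :
    IsOrthogonalSet muRB Λ ↔ Λ.Pairwise fun l l' => ∃ n : ℤ, n ≠ 0 ∧ l 0 - l' 0 = n := by
  simp_rw [IsOrthogonalSet, orthonormal_iff_ite, inner_expLp_muRB]
  constructor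
  · intro h l hl l' hl' hne
    have := h ⟨l, hl⟩ ⟨l', hl'⟩
    rwa [if_neg (by simpa [Subtype.ext_iff]), intervalIntegral_exp_two_pi_mul_I_eq_zero_iff]
      at this
  · rintro h ⟨l, hl⟩ ⟨l', hl'⟩
    split_ifs with he
    · simp [Subtype.mk.inj he]
    · rw [intervalIntegral_exp_two_pi_mul_I_eq_zero_iff]
      exact h hl hl' (by simpa [Subtype.ext_iff] using he)

lemma IsOrthogonalSet.one_le_abs_sub_fst {Λ : Set Plane} (hΛ : IsOrthogonalSet muRB Λ) :
    Λ.Pairwise fun l l' => 1 ≤ |l 0 - l' 0| := by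
  refine (isOrthogonalSet_muRB_iff.mp hΛ).imp fun l l' ⟨n, hn, hdiff⟩ => ?_
  rw [hdiff, ← Int.cast_abs, ← Int.cast_one, Int.cast_le]
  exact Int.one_le_abs hn

lemma encard_inter_ball_le_of_one_le_abs_sub {Λ : Set Plane}
    (hΛ : Λ.Pairwise fun l l' => 1 ≤ |l 0 - l' 0|) (x : Plane) (h : ℝ) :
    (Λ ∩ ball x h).encard ≤ ⌈2 * h⌉₊ := by
  have hinj : InjOn (fun l : Plane => l 0) (Λ ∩ ball x h) := by
    intro l hl l' hl' heq
    by_contra hne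
    have : 1 ≤ |l 0 - l' 0| := hΛ hl.1 hl'.1 hne
    rw [show l 0 = l' 0 from heq, sub_self, abs_zero] at this
    norm_num at this
  rw [← hinj.encard_image]
  refine encard_le_ceil_of_one_le_abs_sub (a := x 0 - h) ?_ ?_
  · rintro _ ⟨l, hl, rfl⟩
    have := abs_lt.1 (abs_apply_sub_lt_of_mem_ball 0 hl.2)
    constructor <;> linarith [this.1, this.2]
  · exact hinj.pairwise_image.2 (hΛ.mono inter_subset_left)

lemma beurlingDensity_le_one_of_one_le_abs_sub {Λ : Set Plane}
    (hΛ : Λ.Pairwise fun l l' => 1 ≤ |l 0 - l' 0|) {r : ℝ} (hr : 1 < r) :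
    beurlingDensity r Λ ≤ 1 := by
  refine beurlingDensity_le_one_of_encard_le _ (encard_inter_ball_le_of_one_le_abs_sub hΛ) ?_
  filter_upwards [(tendsto_rpow_atTop (sub_pos.2 hr)).eventually_ge_atTop 3,
    eventually_ge_atTop 1] with h hpow h1
  have hceil : (⌈2 * h⌉₊ : ℝ) < 2 * h + 1 := Nat.ceil_lt_add_one (by linarith)
  have hsplit : h ^ r = h ^ (r - 1) * h := by
    rw [← Real.rpow_add_one (by linarith), sub_add_cancel]
  nlinarith

lemma beurlingDim_le_one_of_isOrthogonalSet {Λ : Set Plane} (hΛ : IsOrthogonalSet muRB Λ) :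
    beurlingDim Λ ≤ 1 :=
  beurlingDim_le_of_forall_gt zero_le_one fun _ hr =>
    ne_top_of_le_ne_top ENNReal.one_ne_top
      (beurlingDensity_le_one_of_one_le_abs_sub hΛ.one_le_abs_sub_fst hr)

lemma ae_muRB_apply_one_eq_zero : ∀ᵐ x ∂muRB, x 1 = 0 := by
  rw [muRB, ae_map_iff measurable_pt0.aemeasurable
    (measurableSet_eq_fun (by fun_prop) measurable_const)]
  exact .of_forall fun t => pt_apply_one t 0

lemma expLp_muRB_pt (a b : ℝ) : expLp muRB (pt a b) = expLp muRB (pt a 0) := by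
  refine MemLp.toLp_congr _ _ ?_
  filter_upwards [ae_muRB_apply_one_eq_zero] with x hx
  simp [expFn, pt, PiLp.inner_apply, Fin.sum_univ_two, hx]

lemma measurePreserving_pt_zero :
    MeasurePreserving (fun t : ℝ => pt t 0) (volume.restrict (Ioc 0 1)) muRB :=
  ⟨measurable_pt0, by rw [muRB, Measure.restrict_congr_set Ioc_ae_eq_Icc]⟩

section CircleParametrization

open AddCircle

noncomputable def circleParam (z : UnitAddCircle) : Plane := pt (equivIoc 1 0 z) 0

lemma measurePreserving_circleParam : MeasurePreserving circleParam haarAddCircle muRB := by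
  have hvol : (volume : Measure UnitAddCircle) = haarAddCircle := by
    simp [volume_eq_smul_haarAddCircle]
  have hIoc : volume.restrict (Ioc (0:ℝ) (0 + 1)) = volume.restrict (Ioc 0 1) := by
    rw [zero_add]
  have h := (measurePreserving_subtype_coe measurableSet_Ioc).comp
    (measurePreserving_equivIoc 1 (a := 0))
  rw [hvol, hIoc] at h
  exact measurePreserving_pt_zero.comp h

noncomputable def compCircleParam :
    Lp ℂ 2 muRB →ₗᵢ[ℂ] Lp ℂ 2 (haarAddCircle : Measure UnitAddCircle) :=
  Lp.compMeasurePreservingₗᵢ ℂ circleParam measurePreserving_circleParam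

lemma compCircleParam_expLp (n : ℤ) :
    compCircleParam (expLp muRB (pt n 0)) = fourierLp 2 (-n) := by
  refine Lp.ext ?_
  have hcomp : expLp muRB (pt n 0) ∘ circleParam =ᵐ[haarAddCircle] expFn (pt n 0) ∘ circleParam :=
    ae_eq_comp measurePreserving_circleParam.aemeasurable
      (by rw [measurePreserving_circleParam.map_eq]; exact (expFn_memLp _ _).coeFn_toLp)
  refine (Lp.coeFn_compMeasurePreserving _ _).trans <| hcomp.trans <|
    .trans (.of_forall fun z => ?_) (coeFn_fourierLp 2 (-n)).symm
  have hz : ((equivIoc 1 0 z : ℝ) : UnitAddCircle) = z := (equivIoc 1 0).symm_apply_apply z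
  simp only [Function.comp_apply, expFn, circleParam, inner_pt_zero, pt_apply_zero]
  rw [← hz, fourier_coe_apply, hz]
  push_cast
  ring_nf

end CircleParametrization

def intGraph (g : ℤ → ℝ) : Set Plane := range fun n : ℤ => pt n (g n)

theorem isSpectrum_intGraph (g : ℤ → ℝ) : IsSpectrum muRB (intGraph g) := by
  refine ⟨isOrthogonalSet_muRB_iff.mpr ?_, ?_⟩
  · rintro _ ⟨n, rfl⟩ _ ⟨m, rfl⟩ hne
    refine ⟨n - m, fun h => hne ?_, by simp⟩
    rw [sub_eq_zero.mp h]
  · apply compCircleParam.topologicalClosure_span_eq_top_of_image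
    have himage : compCircleParam '' range (fun lam : intGraph g => expLp muRB lam) =
        range (fourierBasis (T := 1)) := by
      ext f
      simp only [mem_image, mem_range, coe_fourierBasis]
      constructor
      · rintro ⟨_, ⟨⟨_, n, rfl⟩, rfl⟩, rfl⟩
        exact ⟨-n, by rw [expLp_muRB_pt, compCircleParam_expLp]⟩
      · rintro ⟨n, rfl⟩
        refine ⟨_, ⟨⟨_, -n, rfl⟩, rfl⟩, ?_⟩
        rw [expLp_muRB_pt, compCircleParam_expLp, neg_neg]
    rw [himage]
    exact fourierBasis.dense_span

lemma ceil_le_encard_intGraph_zero_inter_ball (h : ℝ) :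
    (⌈h⌉₊ : ℕ∞) ≤ (intGraph 0 ∩ ball 0 h).encard := by
  have hsub : (fun k : ℕ => pt k 0) '' (Finset.range ⌈h⌉₊ : Set ℕ) ⊆ intGraph 0 ∩ ball 0 h := by
    rintro _ ⟨k, hk, rfl⟩
    refine ⟨⟨k, by simp⟩, ?_⟩
    have hkh : (k : ℝ) < h := Nat.lt_ceil.1 (by simpa using hk)
    simpa [pt, EuclideanSpace.norm_eq, Fin.sum_univ_two] using hkh
  have hinj : Function.Injective fun k : ℕ => pt k 0 := fun k k' hkk' => by
    simpa using congrArg (· 0) hkk'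
  calc (⌈h⌉₊ : ℕ∞) = (Finset.range ⌈h⌉₊ : Set ℕ).encard := by
        rw [encard_coe_eq_coe_finsetCard, Finset.card_range]
    _ = ((fun k : ℕ => pt k 0) '' (Finset.range ⌈h⌉₊ : Set ℕ)).encard :=
        (hinj.injOn.encard_image).symm
    _ ≤ _ := encard_le_encard hsub

lemma beurlingDim_intGraph_zero : beurlingDim (intGraph 0) = 1 :=
  beurlingDim_eq_of_forall_lt_of_forall_gt one_pos
    (fun _ hr => beurlingDensity_eq_top_of_ceil_le_encard hr.2 0
      ceil_le_encard_intGraph_zero_inter_ball)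
    fun _ hr => ne_top_of_le_ne_top ENNReal.one_ne_top <| beurlingDensity_le_one_of_one_le_abs_sub
      (IsOrthogonalSet.one_le_abs_sub_fst (isSpectrum_intGraph 0).1) hr

lemma encard_intGraph_pow_four_inter_ball_le {e : ℤ → ℕ} (he : Function.Injective e)
    (x : Plane) (h : ℝ) :
    (intGraph (fun n => (4:ℝ) ^ e n) ∩ ball x h).encard ≤ ⌈Real.logb 4 h⌉₊ + 1 := by
  have hinj : InjOn (fun l : Plane => l 1) (intGraph fun n => (4:ℝ) ^ e n) := by
    rintro _ ⟨n, rfl⟩ _ ⟨m, rfl⟩ hnm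
    simp only [pt_apply_one] at hnm
    rw [he (pow_right_injective₀ (by norm_num) (by norm_num) hnm)]
  rw [← (hinj.mono inter_subset_left).encard_image]
  refine (encard_le_encard ?_).trans (encard_range_pow_four_inter_Ioo_le (x 1) h)
  rintro _ ⟨_, ⟨⟨n, rfl⟩, hball⟩, rfl⟩
  have := abs_lt.1 (abs_apply_sub_lt_of_mem_ball 1 hball)
  simp only [pt_apply_one] at this ⊢
  exact ⟨⟨e n, rfl⟩, by constructor <;> linarith [this.1, this.2]⟩

lemma beurlingDim_intGraph_pow_four {e : ℤ → ℕ} (he : Function.Injective e) :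
    beurlingDim (intGraph fun n => (4:ℝ) ^ e n) = 0 :=
  le_antisymm
    (beurlingDim_le_of_forall_gt le_rfl fun _ hr => ne_top_of_le_ne_top ENNReal.one_ne_top <|
      beurlingDensity_le_one_of_encard_le _ (encard_intGraph_pow_four_inter_ball_le he)
        (eventually_ceil_logb_add_one_le_rpow (by norm_num) hr))
    (beurlingDim_nonneg _)

/-- Every spectrum `Λ` of `μ_{R,B}` satisfies `0 ≤ dim_Be(Λ) ≤ 1`, and
both bounds are attained by spectra of `μ_{R,B}`. -/
theorem beurlingDim_spectrum_muRB_bounds :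
    (∀ Λ : Set Plane, IsSpectrum muRB Λ →
        0 ≤ beurlingDim Λ ∧ beurlingDim Λ ≤ 1) ∧
    (∃ Λ₀ : Set Plane, IsSpectrum muRB Λ₀ ∧ beurlingDim Λ₀ = 0) ∧
    (∃ Λ₁ : Set Plane, IsSpectrum muRB Λ₁ ∧ beurlingDim Λ₁ = 1) :=
  ⟨fun Λ hΛ => ⟨beurlingDim_nonneg Λ, beurlingDim_le_one_of_isOrthogonalSet hΛ.1⟩,
    ⟨_, isSpectrum_intGraph _, beurlingDim_intGraph_pow_four Encodable.encode_injective⟩,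
    ⟨_, isSpectrum_intGraph 0, beurlingDim_intGraph_zero⟩⟩
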